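/- Let a and b be orientation-preserving self-homeomorphisms of S¹ = ℝ/ℤ satisfying the contracting ping-pong hypotheses with pairwise disjoint connected closed sets P(a), P(b), P(a⁻¹), P(b⁻¹). Let g ∈ ⟨a, b⟩ be represented by a cyclically reduced word of length at least 2 in the letters {a, b, a⁻¹, b⁻¹}, with rightmost letter c and leftmost letter d (so d ≠ c⁻¹). Then g has a fixed point in P(d) which is an attracting fixed point of g in S¹ and is the unique attracting fixed point of g, and g has a fixed point in P(c⁻¹) which is a repelling fixed point of g. -/

import Mathlib

noncomputable section

/-- The circle `S¹ = ℝ/ℤ`, with its arclength (quotient) metric. -/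
abbrev Circle1 := AddCircle (1 : ℝ)

/-- The group of self-homeomorphisms of a space, with `(f * g) x = f (g x)`. -/
instance {X : Type*} [TopologicalSpace X] : Group (X ≃ₜ X) where
  mul f g := g.trans f
  one := Homeomorph.refl _
  inv := Homeomorph.symm
  mul_assoc _ _ _ := Homeomorph.ext fun _ => rfl
  one_mul _ := Homeomorph.ext fun _ => rfl
  mul_one _ := Homeomorph.ext fun _ => rfl
  inv_mul_cancel f := Homeomorph.ext f.symm_apply_apply

/-- `x` is an attracting fixed point of `f`: it is fixed, and there is an open
neighborhood `U` of `x` such that the iterates of every point of `U` converge to `x`. -/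
def IsAttractingFixedPt {X : Type*} [TopologicalSpace X] (f : X → X) (x : X) : Prop :=
  f x = x ∧ ∃ U : Set X, IsOpen U ∧ x ∈ U ∧
    ∀ y ∈ U, Filter.Tendsto (fun k => f^[k] y) Filter.atTop (nhds x)

/-- `f` is contracting on the set `S`: it strictly decreases distances between
distinct points of `S`. -/
def ContractingOn {X : Type*} [MetricSpace X] (f : X → X) (S : Set X) : Prop :=
  ∀ x ∈ S, ∀ y ∈ S, x ≠ y → dist (f x) (f y) < dist x y

/-- A self-homeomorphism of `ℝ/ℤ` is orientation-preserving if it lifts to a strictly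
increasing homeomorphism of `ℝ`. -/
def OrientationPreserving (f : Circle1 ≃ₜ Circle1) : Prop :=
  ∃ F : ℝ ≃ₜ ℝ, StrictMono F ∧ ∀ t : ℝ, f ((t : ℝ) : Circle1) = ((F t : ℝ) : Circle1)

/-- The hypotheses of the contracting Ping-Pong Lemma for orientation-preserving
self-homeomorphisms `a, b` of `S¹` with ping-pong sets `Pa, Pb, Pa', Pb'` (for
`a`, `b`, `a⁻¹`, `b⁻¹` respectively). -/
structure ContractingPingPong (a b : Circle1 ≃ₜ Circle1)
    (Pa Pb Pa' Pb' : Set Circle1) : Prop where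
  orient_a : OrientationPreserving a
  orient_b : OrientationPreserving b
  unique_attract_a : ∃! x, IsAttractingFixedPt (⇑a) x
  unique_attract_b : ∃! x, IsAttractingFixedPt (⇑b) x
  unique_attract_a' : ∃! x, IsAttractingFixedPt (⇑a⁻¹) x
  unique_attract_b' : ∃! x, IsAttractingFixedPt (⇑b⁻¹) x
  closed_a : IsClosed Pa
  closed_b : IsClosed Pb
  closed_a' : IsClosed Pa'
  closed_b' : IsClosed Pb'
  connected_a : IsConnected Pa
  connected_b : IsConnected Pb
  connected_a' : IsConnected Pa'
  connected_b' : IsConnected Pb'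
  attract_mem_a : ∀ x, IsAttractingFixedPt (⇑a) x → x ∈ Pa
  attract_mem_b : ∀ x, IsAttractingFixedPt (⇑b) x → x ∈ Pb
  attract_mem_a' : ∀ x, IsAttractingFixedPt (⇑a⁻¹) x → x ∈ Pa'
  attract_mem_b' : ∀ x, IsAttractingFixedPt (⇑b⁻¹) x → x ∈ Pb'
  disj_ab : Disjoint Pa Pb
  disj_aa' : Disjoint Pa Pa'
  disj_ab' : Disjoint Pa Pb'
  disj_ba' : Disjoint Pb Pa'
  disj_bb' : Disjoint Pb Pb'
  disj_a'b' : Disjoint Pa' Pb'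
  maps_a : ⇑a '' Pa'ᶜ ⊆ Pa
  maps_b : ⇑b '' Pb'ᶜ ⊆ Pb
  maps_a' : ⇑a⁻¹ '' Paᶜ ⊆ Pa'
  maps_b' : ⇑b⁻¹ '' Pbᶜ ⊆ Pb'
  contracting_a : ContractingOn (⇑a) Pa'ᶜ
  contracting_b : ContractingOn (⇑b) Pb'ᶜ
  contracting_a' : ContractingOn (⇑a⁻¹) Paᶜ
  contracting_b' : ContractingOn (⇑b⁻¹) Pbᶜ

/-- Formal letters for words in `a, b, a⁻¹, b⁻¹`: the letter `(i, s)` stands for `a` if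
`i = 0, s = true`, for `b` if `i = 1, s = true`, and for the corresponding inverse when
`s = false`. -/
abbrev PPLetter := Fin 2 × Bool

/-- The formal inverse of a letter. -/
def PPLetter.formalInv (l : PPLetter) : PPLetter := (l.1, !l.2)

/-- The value of a letter in the group, given `a` and `b`. -/
def letterVal (a b : Circle1 ≃ₜ Circle1) (l : PPLetter) : Circle1 ≃ₜ Circle1 :=
  if l.1 = 0 then (if l.2 then a else a⁻¹) else (if l.2 then b else b⁻¹)

/-- The ping-pong set attached to a letter. -/
def letterSet (Pa Pb Pa' Pb' : Set Circle1) (l : PPLetter) : Set Circle1 :=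
  if l.1 = 0 then (if l.2 then Pa else Pa') else (if l.2 then Pb else Pb')

/-- A word (a list of letters, multiplied left to right so that the rightmost letter is
applied first) is reduced if no letter is adjacent to its formal inverse. -/
def ReducedWord (w : List PPLetter) : Prop :=
  ∀ i, i + 1 < w.length → w.getD (i + 1) default ≠ PPLetter.formalInv (w.getD i default)

/-- A word is cyclically reduced if it is reduced and moreover its first (leftmost) letter
is not the formal inverse of its last (rightmost) letter. -/
def CyclicallyReducedWord (w : List PPLetter) : Prop :=
  ReducedWord w ∧ w.getD 0 default ≠ PPLetter.formalInv (w.getD (w.length - 1) default)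

/-!
A reduced word with leftmost letter `d` and rightmost letter `c` maps the complement of
`P(c⁻¹)` into `P(d)` and contracts it there, by induction on the word; the formal inverse word
does the same with the roles of `P(d)` and `P(c⁻¹)` exchanged. For a cyclically reduced word
these two sets are disjoint, so `g` contracts the compact set `P(d)` into itself and has a fixed
point there attracting everything outside `P(c⁻¹)`; symmetrically `g⁻¹` has one in `P(c⁻¹)`.
Any other attracting fixed point of `g` would lie in `P(c⁻¹)`, where `g⁻¹` contracts, i.e. `g`
expands, which is impossible on the circle since it has no isolated points.
-/

open Filter Topology Set Function

section Dynamics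

variable {X : Type*} [MetricSpace X]

theorem ContractingOn.comp {f g : X → X} {s t : Set X} (hg : ContractingOn g t)
    (hf : ContractingOn f s) (hst : MapsTo f s t) (hinj : InjOn f s) :
    ContractingOn (g ∘ f) s := fun x hx y hy hxy =>
  (hg _ (hst hx) _ (hst hy) (hinj.ne hx hy hxy)).trans (hf x hx y hy hxy)

theorem ContractingOn.eq_of_isFixedPt {f : X → X} {s : Set X} (hf : ContractingOn f s)
    {x y : X} (hx : x ∈ s) (hy : y ∈ s) (hfx : f x = x) (hfy : f y = y) : x = y := by
  by_contra hxy
  simpa [hfx, hfy] using hf x hx y hy hxy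

/-- The minimum of `x ↦ dist x (f x)` on `K` is a fixed point. -/
theorem ContractingOn.exists_fixedPt {f : X → X} {K : Set X} (hf : ContractingOn f K)
    (hcont : Continuous f) (hK : IsCompact K) (hne : K.Nonempty) (hmaps : MapsTo f K K) :
    ∃ x ∈ K, f x = x := by
  obtain ⟨x, hxK, hmin⟩ := hK.exists_isMinOn hne (continuous_id.dist hcont).continuousOn
  refine ⟨x, hxK, by_contra fun hfx => ?_⟩
  have hlt := hf _ (hmaps hxK) _ hxK hfx
  rw [dist_comm (f (f x)), dist_comm (f x) x] at hlt
  exact hlt.not_ge (hmin (hmaps hxK))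

theorem ContractingOn.tendsto_iterate {f : X → X} {K : Set X} (hf : ContractingOn f K)
    (hcont : Continuous f) (hK : IsCompact K) (hmaps : MapsTo f K K) {x₀ y : X}
    (hx₀ : x₀ ∈ K) (hfix : f x₀ = x₀) (hy : y ∈ K) :
    Tendsto (fun k => f^[k] y) atTop (𝓝 x₀) := by
  set d : ℕ → ℝ := fun k => dist (f^[k] y) x₀
  have hmem : ∀ k, f^[k] y ∈ K := fun k => hmaps.iterate k hy
  have hanti : Antitone d := by
    refine antitone_nat_of_succ_le fun k => ?_
    by_cases h : f^[k] y = x₀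
    · simp [d, iterate_succ_apply', h, hfix]
    · simpa [d, iterate_succ_apply', hfix] using (hf _ (hmem k) _ hx₀ h).le
  obtain ⟨L, hL⟩ : ∃ L, Tendsto d atTop (𝓝 L) :=
    ⟨_, tendsto_atTop_ciInf hanti ⟨0, by rintro _ ⟨k, rfl⟩; exact dist_nonneg⟩⟩
  obtain ⟨z, hzK, ψ, hψ, hz⟩ := hK.tendsto_subseq hmem
  have hdz : dist z x₀ = L :=
    tendsto_nhds_unique (hz.dist tendsto_const_nhds) (hL.comp hψ.tendsto_atTop)
  -- along the shifted subsequence the distances tend both to `dist (f z) x₀` and to `L`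
  have hdfz : dist (f z) x₀ = L := by
    refine tendsto_nhds_unique ?_ (((tendsto_add_atTop_iff_nat 1).2 hL).comp hψ.tendsto_atTop)
    simpa [d, iterate_succ_apply', comp_def] using
      ((hcont.tendsto z).comp hz).dist tendsto_const_nhds
  have hzx₀ : z = x₀ := by
    by_contra hne
    simpa [hfix, hdfz, hdz] using hf z hzK x₀ hx₀ hne
  rw [tendsto_iff_dist_tendsto_zero]
  simpa [← hdz, hzx₀] using hL

theorem exists_isAttractingFixedPt_of_mapsTo_compl {f : X → X} (hcont : Continuous f)
    {A B : Set X} (hA : IsCompact A) (hAne : A.Nonempty) (hB : IsClosed B)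
    (hAB : Disjoint A B) (hmaps : MapsTo f Bᶜ A) (hf : ContractingOn f Bᶜ) :
    ∃ x ∈ A, IsAttractingFixedPt f x ∧ ∀ y ∉ B, f y = y → y = x := by
  have hAB' : A ⊆ Bᶜ := hAB.subset_compl_right
  have hfA : ContractingOn f A := fun x hx y hy => hf x (hAB' hx) y (hAB' hy)
  have hmapsA : MapsTo f A A := hmaps.mono_left hAB'
  obtain ⟨x, hxA, hfx⟩ := hfA.exists_fixedPt hcont hA hAne hmapsA
  refine ⟨x, hxA, ⟨hfx, Bᶜ, hB.isOpen_compl, hAB' hxA, fun y hy => ?_⟩,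
    fun y hy hfy => hf.eq_of_isFixedPt hy (hAB' hxA) hfy hfx⟩
  rw [← tendsto_add_atTop_iff_nat 1]
  simpa [iterate_succ_apply] using hfA.tendsto_iterate hcont hA hmapsA hxA hfx (hmaps hy)

/-- Near `y` the map `f` is expanding, so orbits converging to `y` would have to move away
from it. -/
theorem not_isAttractingFixedPt_of_contractingOn_leftInverse [∀ x : X, (𝓝[≠] x).NeBot]
    {f f' : X → X} (hff' : LeftInverse f' f) {V : Set X} (hV : IsOpen V)
    (hf' : ContractingOn f' V) {y : X} (hy : y ∈ V) : ¬IsAttractingFixedPt f y := by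
  rintro ⟨hfy, U, hU, hyU, hconv⟩
  obtain ⟨z, hzU, hzy⟩ : ∃ z ∈ U, z ≠ y :=
    ((eventually_nhdsWithin_of_eventually_nhds (hU.mem_nhds hyU)).and
      (self_mem_nhdsWithin (s := {y}ᶜ))).exists
  have hz := hconv z hzU
  have hne : ∀ k, f^[k] z ≠ y := fun k h =>
    hzy (hff'.injective.iterate k (h.trans (iterate_fixed hfy k).symm))
  obtain ⟨k₀, hk₀⟩ := eventually_atTop.1 (hz.eventually (hV.mem_nhds hy))
  have hmono : Monotone fun k => dist (f^[k + k₀] z) y := by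
    refine monotone_nat_of_le_succ fun k => ?_
    have h := hf' _ (hk₀ (k + k₀ + 1) (by omega)) y hy (hne _)
    rw [iterate_succ_apply', hff', ← hfy, hff', hfy] at h
    rw [add_right_comm, iterate_succ_apply']
    exact h.le
  have hlim : Tendsto (fun k => dist (f^[k + k₀] z) y) atTop (𝓝 0) :=
    (tendsto_add_atTop_iff_nat k₀).2 (tendsto_iff_dist_tendsto_zero.1 hz)
  exact (dist_pos.2 (hne k₀)).not_ge (by simpa using hmono.ge_of_tendsto hlim 0)

theorem exists_isAttractingFixedPt_of_pingPong [ConnectedSpace X] (f : X ≃ₜ X) {A B : Set X}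
    (hA : IsCompact A) (hB : IsCompact B) (hAne : A.Nonempty) (hBne : B.Nonempty)
    (hAB : Disjoint A B) (hmaps : MapsTo f Bᶜ A) (hf : ContractingOn f Bᶜ)
    (hmaps' : MapsTo f.symm Aᶜ B) (hf' : ContractingOn f.symm Aᶜ) :
    (∃ x ∈ A, f x = x ∧ IsAttractingFixedPt f x ∧ ∀ y, IsAttractingFixedPt f y → y = x) ∧
      ∃ x ∈ B, f x = x ∧ IsAttractingFixedPt f.symm x := by
  have : Nontrivial X := ⟨⟨_, _, hAB.ne_of_mem hAne.some_mem hBne.some_mem⟩⟩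
  obtain ⟨x, hxA, hx, hxuniq⟩ := exists_isAttractingFixedPt_of_mapsTo_compl f.continuous hA
    hAne hB.isClosed hAB hmaps hf
  obtain ⟨x', hx'B, hx', -⟩ := exists_isAttractingFixedPt_of_mapsTo_compl f.symm.continuous
    hB hBne hA.isClosed hAB.symm hmaps' hf'
  refine ⟨⟨x, hxA, hx.1, hx, fun y hy => ?_⟩, x', hx'B, (f.symm_apply_eq.1 hx'.1).symm, hx'⟩
  by_cases hyB : y ∈ B
  · exact absurd hy (not_isAttractingFixedPt_of_contractingOn_leftInverse f.left_inv
      hA.isClosed.isOpen_compl hf' (hAB.notMem_of_mem_right hyB))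
  · exact hxuniq y hyB hy.1

end Dynamics

namespace PPLetter

theorem forall_iff {p : PPLetter → Prop} :
    (∀ l, p l) ↔ p (0, true) ∧ p (0, false) ∧ p (1, true) ∧ p (1, false) := by
  refine ⟨fun h => ⟨h _, h _, h _, h _⟩, fun ⟨h0, h0', h1, h1'⟩ l => ?_⟩
  obtain ⟨i, s⟩ := l
  fin_cases i <;> cases s <;> assumption

@[simp]
theorem formalInv_formalInv (l : PPLetter) : l.formalInv.formalInv = l := by
  simp [formalInv]

theorem letterVal_formalInv (a b : Circle1 ≃ₜ Circle1) (l : PPLetter) :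
    letterVal a b l.formalInv = (letterVal a b l)⁻¹ := by
  revert l
  exact forall_iff.2 ⟨rfl, (inv_inv a).symm, rfl, (inv_inv b).symm⟩

theorem isChain_reverse_map_formalInv {w : List PPLetter}
    (hred : w.IsChain fun l l' => l' ≠ l.formalInv) :
    (w.map formalInv).reverse.IsChain fun l l' => l' ≠ l.formalInv := by
  rw [List.isChain_reverse, List.isChain_map]
  refine hred.imp fun l l' h h' => h ?_
  rw [h', formalInv_formalInv]

theorem prod_map_letterVal_reverse_map_formalInv (a b : Circle1 ≃ₜ Circle1)
    (w : List PPLetter) :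
    ((w.map formalInv).reverse.map (letterVal a b)).prod = (w.map (letterVal a b)).prod⁻¹ := by
  simp only [List.prod_inv_reverse, List.map_reverse, List.map_map]
  congr 2
  exact List.map_congr_left fun l _ => letterVal_formalInv a b l

end PPLetter

theorem reducedWord_iff_isChain {w : List PPLetter} :
    ReducedWord w ↔ w.IsChain fun l l' => l' ≠ l.formalInv := by
  rw [List.isChain_iff_getElem]
  refine forall_congr' fun i => forall_congr' fun hi => ?_
  rw [List.getD_eq_getElem _ _ hi, List.getD_eq_getElem _ _ (Nat.lt_of_succ_lt hi)]

namespace ContractingPingPong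

open PPLetter

variable {a b : Circle1 ≃ₜ Circle1} {Pa Pb Pa' Pb' : Set Circle1}

theorem isCompact_letterSet (hpp : ContractingPingPong a b Pa Pb Pa' Pb') (l : PPLetter) :
    IsCompact (letterSet Pa Pb Pa' Pb' l) := by
  revert l
  exact forall_iff.2 ⟨hpp.closed_a.isCompact, hpp.closed_a'.isCompact,
    hpp.closed_b.isCompact, hpp.closed_b'.isCompact⟩

theorem letterSet_nonempty (hpp : ContractingPingPong a b Pa Pb Pa' Pb') (l : PPLetter) :
    (letterSet Pa Pb Pa' Pb' l).Nonempty := by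
  revert l
  exact forall_iff.2 ⟨hpp.connected_a.nonempty, hpp.connected_a'.nonempty,
    hpp.connected_b.nonempty, hpp.connected_b'.nonempty⟩

theorem disjoint_letterSet (hpp : ContractingPingPong a b Pa Pb Pa' Pb') {l l' : PPLetter}
    (h : l ≠ l') : Disjoint (letterSet Pa Pb Pa' Pb' l) (letterSet Pa Pb Pa' Pb' l') := by
  obtain ⟨i, s⟩ := l
  obtain ⟨j, t⟩ := l'
  fin_cases i <;> fin_cases j <;> cases s <;> cases t <;>
    first
      | exact absurd rfl h
      | exact hpp.disj_ab | exact hpp.disj_ab.symm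
      | exact hpp.disj_aa' | exact hpp.disj_aa'.symm
      | exact hpp.disj_ab' | exact hpp.disj_ab'.symm
      | exact hpp.disj_ba' | exact hpp.disj_ba'.symm
      | exact hpp.disj_bb' | exact hpp.disj_bb'.symm
      | exact hpp.disj_a'b' | exact hpp.disj_a'b'.symm

theorem mapsTo_letterVal (hpp : ContractingPingPong a b Pa Pb Pa' Pb') (l : PPLetter) :
    MapsTo (letterVal a b l) (letterSet Pa Pb Pa' Pb' l.formalInv)ᶜ
      (letterSet Pa Pb Pa' Pb' l) := by
  revert l
  exact forall_iff.2 ⟨mapsTo_iff_image_subset.2 hpp.maps_a,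
    mapsTo_iff_image_subset.2 hpp.maps_a', mapsTo_iff_image_subset.2 hpp.maps_b,
    mapsTo_iff_image_subset.2 hpp.maps_b'⟩

theorem contractingOn_letterVal (hpp : ContractingPingPong a b Pa Pb Pa' Pb') (l : PPLetter) :
    ContractingOn (letterVal a b l) (letterSet Pa Pb Pa' Pb' l.formalInv)ᶜ := by
  revert l
  exact forall_iff.2
    ⟨hpp.contracting_a, hpp.contracting_a', hpp.contracting_b, hpp.contracting_b'⟩

theorem mapsTo_prod (hpp : ContractingPingPong a b Pa Pb Pa' Pb') {w : List PPLetter}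
    (hw : w ≠ []) (hred : w.IsChain fun l l' => l' ≠ l.formalInv) :
    MapsTo (w.map (letterVal a b)).prod (letterSet Pa Pb Pa' Pb' (w.getLast hw).formalInv)ᶜ
      (letterSet Pa Pb Pa' Pb' (w.head hw)) := by
  induction w with
  | nil => contradiction
  | cons l t ih =>
    rcases t with _ | ⟨l', t⟩
    · simpa using hpp.mapsTo_letterVal l
    · obtain ⟨hll', hred⟩ := List.isChain_cons_cons.1 hred
      rw [List.getLast_cons (List.cons_ne_nil l' t), List.map_cons, List.prod_cons]
      exact (hpp.mapsTo_letterVal l).comp ((ih (List.cons_ne_nil l' t) hred).mono_right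
        (hpp.disjoint_letterSet hll').subset_compl_right)

theorem contractingOn_prod (hpp : ContractingPingPong a b Pa Pb Pa' Pb') {w : List PPLetter}
    (hw : w ≠ []) (hred : w.IsChain fun l l' => l' ≠ l.formalInv) :
    ContractingOn (w.map (letterVal a b)).prod
      (letterSet Pa Pb Pa' Pb' (w.getLast hw).formalInv)ᶜ := by
  induction w with
  | nil => contradiction
  | cons l t ih =>
    rcases t with _ | ⟨l', t⟩
    · simpa using hpp.contractingOn_letterVal l
    · obtain ⟨hll', hred⟩ := List.isChain_cons_cons.1 hred
      rw [List.getLast_cons (List.cons_ne_nil l' t), List.map_cons, List.prod_cons]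
      exact (hpp.contractingOn_letterVal l).comp (ih (List.cons_ne_nil l' t) hred)
        ((hpp.mapsTo_prod (List.cons_ne_nil l' t) hred).mono_right
          (hpp.disjoint_letterSet hll').subset_compl_right) (Homeomorph.injective _).injOn

theorem mapsTo_prod_inv (hpp : ContractingPingPong a b Pa Pb Pa' Pb') {w : List PPLetter}
    (hw : w ≠ []) (hred : w.IsChain fun l l' => l' ≠ l.formalInv) :
    MapsTo ⇑(w.map (letterVal a b)).prod⁻¹ (letterSet Pa Pb Pa' Pb' (w.head hw))ᶜ
      (letterSet Pa Pb Pa' Pb' (w.getLast hw).formalInv) := by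
  have hw' : (w.map formalInv).reverse ≠ [] := by simpa using hw
  simpa [← prod_map_letterVal_reverse_map_formalInv, List.head_reverse, List.getLast_reverse]
    using hpp.mapsTo_prod hw' (isChain_reverse_map_formalInv hred)

theorem contractingOn_prod_inv (hpp : ContractingPingPong a b Pa Pb Pa' Pb')
    {w : List PPLetter} (hw : w ≠ []) (hred : w.IsChain fun l l' => l' ≠ l.formalInv) :
    ContractingOn ⇑(w.map (letterVal a b)).prod⁻¹ (letterSet Pa Pb Pa' Pb' (w.head hw))ᶜ := by
  have hw' : (w.map formalInv).reverse ≠ [] := by simpa using hw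
  simpa [← prod_map_letterVal_reverse_map_formalInv, List.getLast_reverse]
    using hpp.contractingOn_prod hw' (isChain_reverse_map_formalInv hred)

end ContractingPingPong

/-- Under the contracting ping-pong hypotheses, if `g ∈ ⟨a, b⟩` is represented by a
cyclically reduced word of length at least 2 with rightmost letter `c` and leftmost letter
`d`, then `g` has a fixed point in `P(d)` which is an attracting fixed point of `g` in `S¹`
and is the unique attracting fixed point of `g`, and `g` has a fixed point in `P(c⁻¹)`
which is a repelling fixed point of `g` (i.e. attracting for `g⁻¹`). -/
theorem pingpong_attracting_repelling (a b : Circle1 ≃ₜ Circle1)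
    (Pa Pb Pa' Pb' : Set Circle1) (hpp : ContractingPingPong a b Pa Pb Pa' Pb')
    (w : List PPLetter) (hlen : 2 ≤ w.length) (hcyc : CyclicallyReducedWord w)
    (g : Circle1 ≃ₜ Circle1) (hg : g = (w.map (letterVal a b)).prod) :
    (∃ x ∈ letterSet Pa Pb Pa' Pb' (w.getD 0 default),
      g x = x ∧ IsAttractingFixedPt (⇑g) x ∧
        ∀ y : Circle1, IsAttractingFixedPt (⇑g) y → y = x) ∧
    (∃ x ∈ letterSet Pa Pb Pa' Pb' (PPLetter.formalInv (w.getD (w.length - 1) default)),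
      g x = x ∧ IsAttractingFixedPt (⇑g⁻¹) x) := by
  obtain ⟨hred, hcyc⟩ := hcyc
  rw [reducedWord_iff_isChain] at hred
  have hw : w ≠ [] := List.ne_nil_of_length_pos (by omega)
  have hhead : w.getD 0 default = w.head hw := by cases w <;> simp_all
  have hlast : w.getD (w.length - 1) default = w.getLast hw := by
    rw [List.getLast_eq_getElem, List.getD_eq_getElem]
  rw [hhead, hlast] at hcyc ⊢
  subst hg
  exact exists_isAttractingFixedPt_of_pingPong _ (hpp.isCompact_letterSet _)
    (hpp.isCompact_letterSet _) (hpp.letterSet_nonempty _) (hpp.letterSet_nonempty _)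
    (hpp.disjoint_letterSet hcyc) (hpp.mapsTo_prod hw hred) (hpp.contractingOn_prod hw hred)
    (hpp.mapsTo_prod_inv hw hred) (hpp.contractingOn_prod_inv hw hred)
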